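/- arXiv:1506.07233 — 8 statements merged into one kernel-verified Lean document; each statement's English description precedes it below -/
import Mathlib

section
/- Fix an integer N ≥ 2 and positive reals a11, a12, a21, a22 with a12 < a21, a12 − a22 > (N−1)(a21 − a12), and a11 − a21 > (N−1)(a21 − a12). Let N1, N2 be integers with N1 ≥ 1, N2 ≥ 1, N1 + N2 = N, and let w11, w12, w21, w22 be nonnegative integers with w11 + w12 = (N−1)·N1 and w21 + w22 = (N−1)·N2. Then ((N2 + w21)·a21 + w22·a22) / ((N1 + w11)·a11 + w12·a12 + (N2 + w21)·a21 + w22·a22) < N2/N. -/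
/-- Algebraic core of Theorem 2(a) for the transition `1 → 2`: under
`min(a12 − a22, a11 − a21) > (N−1)(a21 − a12)` with `a12 < a21`, the strategy-adoption
rate `p_{1→2}` is strictly below the voter-model rate `N₂/N`. -/
theorem deathbirth_rate_one_to_two_lt_voter (N : ℕ) (hN : 2 ≤ N)
    (a11 a12 a21 a22 : ℝ)
    (h11 : 0 < a11) (h12 : 0 < a12) (h21 : 0 < a21) (h22 : 0 < a22)
    (hlt : a12 < a21)
    (hc1 : a12 - a22 > ((N : ℝ) - 1) * (a21 - a12))
    (hc2 : a11 - a21 > ((N : ℝ) - 1) * (a21 - a12))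
    (N1 N2 : ℕ) (hN1 : 1 ≤ N1) (hN2 : 1 ≤ N2) (hsum : N1 + N2 = N)
    (w11 w12 w21 w22 : ℕ)
    (hw1 : w11 + w12 = (N - 1) * N1) (hw2 : w21 + w22 = (N - 1) * N2) :
    (((N2 : ℝ) + w21) * a21 + w22 * a22) /
        (((N1 : ℝ) + w11) * a11 + w12 * a12 + ((N2 : ℝ) + w21) * a21 + w22 * a22)
      < (N2 : ℝ) / N := by
  have h1N : 1 ≤ N := le_trans (by norm_num) hN
  have hw1' : (w11 : ℝ) + w12 = ((N : ℝ) - 1) * N1 := by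
    have := congrArg (Nat.cast : ℕ → ℝ) hw1
    push_cast [Nat.cast_sub h1N] at this
    linarith
  have hw2' : (w21 : ℝ) + w22 = ((N : ℝ) - 1) * N2 := by
    have := congrArg (Nat.cast : ℕ → ℝ) hw2
    push_cast [Nat.cast_sub h1N] at this
    linarith
  have hsum' : (N1 : ℝ) + N2 = N := by exact_mod_cast hsum
  have hN1' : (1 : ℝ) ≤ N1 := by exact_mod_cast hN1
  have hN2' : (1 : ℝ) ≤ N2 := by exact_mod_cast hN2
  have hw11 : (0 : ℝ) ≤ w11 := Nat.cast_nonneg _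
  have hw12 : (0 : ℝ) ≤ w12 := Nat.cast_nonneg _
  have hw21 : (0 : ℝ) ≤ w21 := Nat.cast_nonneg _
  have hw22 : (0 : ℝ) ≤ w22 := Nat.cast_nonneg _
  have hNpos : (0 : ℝ) < N := by positivity
  have hc : (0 : ℝ) < a21 - a12 := by linarith
  have hden : (0 : ℝ) < ((N1 : ℝ) + w11) * a11 + w12 * a12 + ((N2 : ℝ) + w21) * a21 + w22 * a22 := by
    have p1 : (0:ℝ) < ((N1:ℝ) + w11) * a11 := by positivity
    have p2 : (0:ℝ) ≤ (w12:ℝ) * a12 := by positivity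
    have p3 : (0:ℝ) < ((N2:ℝ) + w21) * a21 := by positivity
    have p4 : (0:ℝ) ≤ (w22:ℝ) * a22 := by positivity
    linarith
  rw [div_lt_div_iff₀ hden hNpos]
  have s1 : (N2:ℝ) * (((N1:ℝ) + w11) * (a21 + ((N:ℝ)-1)*(a21-a12))) <
      (N2:ℝ) * (((N1:ℝ) + w11) * a11) := by
    have hm : (0:ℝ) < (N2:ℝ) * ((N1:ℝ) + w11) := by positivity
    nlinarith [mul_lt_mul_of_pos_left hc2 hm]
  have s2 : (N1:ℝ) * ((w22:ℝ) * a22) ≤ (N1:ℝ) * ((w22:ℝ) * (a12 - ((N:ℝ)-1)*(a21-a12))) := by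
    have hm : (0:ℝ) ≤ (N1:ℝ) * (w22:ℝ) := by positivity
    nlinarith [mul_le_mul_of_nonneg_left hc1.le hm]
  have e : (N2:ℝ) * (((N1:ℝ) + w11) * (a21 + ((N:ℝ)-1)*(a21-a12))) + (N2:ℝ) * ((w12:ℝ) * a12)
      - ((N1:ℝ) * (((N2:ℝ) + w21) * a21) + (N1:ℝ) * ((w22:ℝ) * (a12 - ((N:ℝ)-1)*(a21-a12))))
      = (a21 - a12) * (N:ℝ) * ((N2:ℝ) * w11 + (N1:ℝ) * w22) := by
    linear_combination ((N2:ℝ) * a12) * hw1' + (-(N1:ℝ) * a21) * hw2'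
  have hpos : (0:ℝ) ≤ (a21 - a12) * (N:ℝ) * ((N2:ℝ) * w11 + (N1:ℝ) * w22) := by positivity
  have s3 : (N1:ℝ) * (((N2:ℝ) + w21) * a21) + (N1:ℝ) * ((w22:ℝ) * (a12 - ((N:ℝ)-1)*(a21-a12)))
      ≤ (N2:ℝ) * (((N1:ℝ) + w11) * (a21 + ((N:ℝ)-1)*(a21-a12))) + (N2:ℝ) * ((w12:ℝ) * a12) := by
    linarith
  have hkey : (N1:ℝ) * (((N2:ℝ) + w21) * a21 + (w22:ℝ) * a22) <
      (N2:ℝ) * (((N1:ℝ) + w11) * a11 + (w12:ℝ) * a12) := by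
    ring_nf at s1 s2 s3 ⊢
    linarith
  rw [← hsum']
  ring_nf at hkey ⊢
  linarith
end

section
/- Fix an integer N ≥ 2 and positive reals a11, a12, a21, a22 with a12 < a21, a12 − a22 > (N−1)(a21 − a12), and a11 − a21 > (N−1)(a21 − a12). Let N1, N2 be integers with N1 ≥ 1, N2 ≥ 1, N1 + N2 = N, and let w11, w12, w21, w22 be nonnegative integers with w11 + w12 = (N−1)·N1 and w21 + w22 = (N−1)·N2. Then ((N1 + w12)·a12 + w11·a11) / ((N1 + w12)·a12 + w11·a11 + (N2 + w22)·a22 + w21·a21) > N1/N. -/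
/-- Algebraic core of Theorem 2(a) for the transition `2 → 1`: under
`min(a12 − a22, a11 − a21) > (N−1)(a21 − a12)` with `a12 < a21`, the strategy-adoption
rate `p_{2→1}` is strictly above the voter-model rate `N₁/N`. -/
theorem deathbirth_rate_two_to_one_gt_voter (N : ℕ) (hN : 2 ≤ N)
    (a11 a12 a21 a22 : ℝ)
    (h11 : 0 < a11) (h12 : 0 < a12) (h21 : 0 < a21) (h22 : 0 < a22)
    (hlt : a12 < a21)
    (hc1 : a12 - a22 > ((N : ℝ) - 1) * (a21 - a12))
    (hc2 : a11 - a21 > ((N : ℝ) - 1) * (a21 - a12))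
    (N1 N2 : ℕ) (hN1 : 1 ≤ N1) (hN2 : 1 ≤ N2) (hsum : N1 + N2 = N)
    (w11 w12 w21 w22 : ℕ)
    (hw1 : w11 + w12 = (N - 1) * N1) (hw2 : w21 + w22 = (N - 1) * N2) :
    (((N1 : ℝ) + w12) * a12 + w11 * a11) /
        (((N1 : ℝ) + w12) * a12 + w11 * a11 + ((N2 : ℝ) + w22) * a22 + w21 * a21)
      > (N1 : ℝ) / N := by
  have h1N : 1 ≤ N := le_trans (by norm_num) hN
  have hw1' : (w11 : ℝ) + w12 = ((N : ℝ) - 1) * N1 := by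
    have := congrArg (Nat.cast : ℕ → ℝ) hw1
    push_cast [Nat.cast_sub h1N] at this
    linarith
  have hw2' : (w21 : ℝ) + w22 = ((N : ℝ) - 1) * N2 := by
    have := congrArg (Nat.cast : ℕ → ℝ) hw2
    push_cast [Nat.cast_sub h1N] at this
    linarith
  have hsum' : (N1 : ℝ) + N2 = N := by exact_mod_cast hsum
  have hN1' : (1:ℝ) ≤ N1 := by exact_mod_cast hN1
  have hN2' : (1:ℝ) ≤ N2 := by exact_mod_cast hN2
  have hN' : (2:ℝ) ≤ N := by exact_mod_cast hN
  have hw11 : (0:ℝ) ≤ w11 := Nat.cast_nonneg _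
  have hw12 : (0:ℝ) ≤ w12 := Nat.cast_nonneg _
  have hw21 : (0:ℝ) ≤ w21 := Nat.cast_nonneg _
  have hw22 : (0:ℝ) ≤ w22 := Nat.cast_nonneg _
  have hw21le : (w21 : ℝ) ≤ ((N:ℝ)-1) * N2 := by linarith
  have hprod : (0:ℝ) ≤ ((N:ℝ)-1)*(a21-a12) := mul_nonneg (by linarith) (by linarith)
  have ha2212 : a22 < a12 := by linarith
  have ha1112 : a12 < a11 := by linarith
  have hA : 0 < ((N1 : ℝ) + w12) * a12 + w11 * a11 := by positivity
  have hB : 0 ≤ ((N2 : ℝ) + w22) * a22 + w21 * a21 := by positivity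
  have hD : 0 < ((N1 : ℝ) + w12) * a12 + w11 * a11 + ((N2 : ℝ) + w22) * a22 + w21 * a21 := by
    linarith
  set A := ((N1 : ℝ) + w12) * a12 + w11 * a11 with hAdef
  set B := ((N2 : ℝ) + w22) * a22 + w21 * a21 with hBdef
  have hA_eq : A = (N:ℝ)*N1*a12 + w11*(a11-a12) := by
    rw [hAdef]; linear_combination a12 * hw1'
  have hB_eq : B = (N:ℝ)*N2*a22 + w21*(a21-a22) := by
    rw [hBdef]; linear_combination a22 * hw2'
  have hstep1 : (N1:ℝ)*B ≤ N1*((N:ℝ)*N2*a22 + ((N:ℝ)-1)*N2*(a21-a22)) := by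
    have hBle : B ≤ (N:ℝ)*N2*a22 + ((N:ℝ)-1)*N2*(a21-a22) := by
      have := mul_le_mul_of_nonneg_right hw21le (by linarith : (0:ℝ) ≤ a21 - a22)
      rw [hB_eq]; linarith
    exact mul_le_mul_of_nonneg_left hBle (by linarith : (0:ℝ) ≤ (N1:ℝ))
  have hstep2 : (N1:ℝ)*((N:ℝ)*N2*a22 + ((N:ℝ)-1)*N2*(a21-a22)) < (N2:ℝ)*((N:ℝ)*N1*a12) := by
    have hsc : (N:ℝ)*a22 + ((N:ℝ)-1)*(a21-a22) < (N:ℝ)*a12 := by linarith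
    have hpos : (0:ℝ) < (N1:ℝ)*N2 :=
      mul_pos (by linarith : (0:ℝ) < (N1:ℝ)) (by linarith : (0:ℝ) < (N2:ℝ))
    calc (N1:ℝ)*((N:ℝ)*N2*a22 + ((N:ℝ)-1)*N2*(a21-a22))
        = (N1:ℝ)*N2*((N:ℝ)*a22 + ((N:ℝ)-1)*(a21-a22)) := by ring
      _ < (N1:ℝ)*N2*((N:ℝ)*a12) := mul_lt_mul_of_pos_left hsc hpos
      _ = (N2:ℝ)*((N:ℝ)*N1*a12) := by ring
  have hstep3 : (N2:ℝ)*((N:ℝ)*N1*a12) ≤ (N2:ℝ)*A := by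
    rw [hA_eq]
    have h0 : (0:ℝ) ≤ N2*(w11*(a11-a12)) :=
      mul_nonneg (by linarith) (mul_nonneg hw11 (by linarith))
    linarith
  have key : (N1:ℝ)*B < (N2:ℝ)*A := by linarith
  have hDeq : A + ((N2:ℝ) + w22) * a22 + w21 * a21 = A + B := by rw [hBdef]; ring
  rw [gt_iff_lt, hDeq, div_lt_div_iff₀ (by positivity) (by linarith : (0:ℝ) < A + B)]
  calc (N1:ℝ) * (A + B) = N1*A + N1*B := by ring
    _ < N1*A + N2*A := by linarith
    _ = A * N := by rw [← hsum']; ring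
end

section
/- Fix an integer N ≥ 2 and positive reals a11, a12, a21, a22 with a22 ≤ a21. Let N1, N2 ≥ 1 be integers with N1 + N2 = N, and w11, w12, w21, w22 nonnegative integers with w11 + w12 = (N−1)·N1 and w21 + w22 = (N−1)·N2. Then ((N2 + w21)·a21 + w22·a22) / ((N1 + w11)·a11 + w12·a12 + (N2 + w21)·a21 + w22·a22) ≤ N·N2·a21 / (N·N1·a11 + w12·(a12 − a11) + N·N2·a21), and the denominator on the right-hand side is positive. -/
/-- Bound (1-wins-4): for the death-birth process on an `N`-regular graph with
`a22 ≤ a21`, the rate `p_{1→2}` is bounded above by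
`N·N₂·a21 / (N·N₁·a11 + w₁₂(a12 − a11) + N·N₂·a21)`, whose denominator is positive. -/
theorem deathbirth_rate_bound_one_to_two (N : ℕ) (hN : 2 ≤ N)
    (a11 a12 a21 a22 : ℝ)
    (h11 : 0 < a11) (h12 : 0 < a12) (h21 : 0 < a21) (h22 : 0 < a22)
    (hle : a22 ≤ a21)
    (N1 N2 : ℕ) (hN1 : 1 ≤ N1) (hN2 : 1 ≤ N2) (hsum : N1 + N2 = N)
    (w11 w12 w21 w22 : ℕ)
    (hw1 : w11 + w12 = (N - 1) * N1) (hw2 : w21 + w22 = (N - 1) * N2) :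
    0 < (N : ℝ) * N1 * a11 + w12 * (a12 - a11) + (N : ℝ) * N2 * a21 ∧
    (((N2 : ℝ) + w21) * a21 + w22 * a22) /
        (((N1 : ℝ) + w11) * a11 + w12 * a12 + ((N2 : ℝ) + w21) * a21 + w22 * a22)
      ≤ (N : ℝ) * N2 * a21 /
          ((N : ℝ) * N1 * a11 + w12 * (a12 - a11) + (N : ℝ) * N2 * a21) := by
  have hNpos : 1 ≤ N := by omega
  have h1 : w11 + w12 + N1 = N * N1 := by
    rw [hw1]
    calc (N - 1) * N1 + N1 = (N - 1 + 1) * N1 := by ring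
      _ = N * N1 := by rw [Nat.sub_add_cancel (by omega)]
  have h2 : w21 + w22 + N2 = N * N2 := by
    rw [hw2]
    calc (N - 1) * N2 + N2 = (N - 1 + 1) * N2 := by ring
      _ = N * N2 := by rw [Nat.sub_add_cancel (by omega)]
  have h1R : (w11 : ℝ) + w12 + N1 = (N : ℝ) * N1 := by exact_mod_cast congrArg (Nat.cast : ℕ → ℝ) h1
  have h2R : (w21 : ℝ) + w22 + N2 = (N : ℝ) * N2 := by exact_mod_cast congrArg (Nat.cast : ℕ → ℝ) h2
  -- X := N*N1*a11 + w12*(a12 - a11) = (N1 + w11)*a11 + w12*a12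
  have hX : (N : ℝ) * N1 * a11 + w12 * (a12 - a11) = ((N1 : ℝ) + w11) * a11 + w12 * a12 := by
    rw [← h1R]; ring
  have hN1R : (1 : ℝ) ≤ (N1 : ℝ) := by exact_mod_cast hN1
  have hN2R : (1 : ℝ) ≤ (N2 : ℝ) := by exact_mod_cast hN2
  have hw11 : (0 : ℝ) ≤ w11 := Nat.cast_nonneg _
  have hw12 : (0 : ℝ) ≤ w12 := Nat.cast_nonneg _
  have hw21 : (0 : ℝ) ≤ w21 := Nat.cast_nonneg _
  have hw22 : (0 : ℝ) ≤ w22 := Nat.cast_nonneg _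
  have hXpos : 0 < ((N1 : ℝ) + w11) * a11 + w12 * a12 := by nlinarith
  have hApos : 0 < ((N2 : ℝ) + w21) * a21 + w22 * a22 := by nlinarith
  have hAC : ((N2 : ℝ) + w21) * a21 + w22 * a22 ≤ (N : ℝ) * N2 * a21 := by
    rw [← h2R]; nlinarith
  have hCpos : 0 < (N : ℝ) * N2 * a21 := lt_of_lt_of_le hApos hAC
  have hRden : 0 < (N : ℝ) * N1 * a11 + w12 * (a12 - a11) + (N : ℝ) * N2 * a21 := by
    rw [hX]; positivity
  refine ⟨hRden, ?_⟩
  rw [hX] at hRden ⊢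
  rw [div_le_div_iff₀ (by linarith) hRden]
  nlinarith [mul_le_mul_of_nonneg_right hAC (le_of_lt hXpos)]
end

section
/- Let N ≥ 2 be an integer and M+, M−, m+ positive reals with M− ≤ M+ and (N−1)·m+ > (N−2)·M+ + M−. Then there exists ε ∈ (0,1) such that for every integer z with 1 ≤ z ≤ N−1, the quantity (m+ − M+)·z + (N−1)·M+ + M− is positive and m+·z / ((m+ − M+)·z + (N−1)·M+ + M−) ≥ (1−ε)·z/N + ε. -/
set_option maxHeartbeats 800000


/-- Transition `1 → 2` in Lemma 3.2: if `(N−1)m₊ > (N−2)M₊ + M₋` with `M₋ ≤ M₊`, then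
for some `ε ∈ (0,1)` the lower bound `g₁(z)` for the rate `p_{1→2}` dominates the
modified voter model rate `h₁(z) = (1−ε)z/N + ε` for all `1 ≤ z ≤ N−1`. -/
theorem deathbirth_g1_dominates_h1 (N : ℕ) (hN : 2 ≤ N)
    (Mp Mm mp : ℝ) (hMp : 0 < Mp) (hMm : 0 < Mm) (hmp : 0 < mp)
    (hle : Mm ≤ Mp)
    (hcond : ((N : ℝ) - 1) * mp > ((N : ℝ) - 2) * Mp + Mm) :
    ∃ ε ∈ Set.Ioo (0 : ℝ) 1, ∀ z : ℕ, 1 ≤ z → z ≤ N - 1 →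
      0 < (mp - Mp) * z + ((N : ℝ) - 1) * Mp + Mm ∧
      mp * z / ((mp - Mp) * z + ((N : ℝ) - 1) * Mp + Mm)
        ≥ (1 - ε) * z / N + ε := by
  have hNR : (2:ℝ) ≤ (N:ℝ) := by exact_mod_cast hN
  have hN0 : (0:ℝ) < N := by linarith
  have hmm : Mm < mp := by nlinarith
  -- endpoint gaps
  set δ : ℝ := min ((N:ℝ)*mp - (mp + ((N:ℝ)-2)*Mp + Mm))
      ((N:ℝ)*mp - (((N:ℝ)-1)*mp + Mm)) with hδ
  have hδ1 : 0 < (N:ℝ)*mp - (mp + ((N:ℝ)-2)*Mp + Mm) := by nlinarith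
  have hδ2 : 0 < (N:ℝ)*mp - (((N:ℝ)-1)*mp + Mm) := by nlinarith
  have hδpos : 0 < δ := lt_min hδ1 hδ2
  have hmin1 : δ ≤ (N:ℝ)*mp - (mp + ((N:ℝ)-2)*Mp + Mm) := min_le_left _ _
  have hmin2 : δ ≤ (N:ℝ)*mp - (((N:ℝ)-1)*mp + Mm) := min_le_right _ _
  set ε : ℝ := min (1/2) (δ / ((N:ℝ)^2 * mp)) with hε
  have hεpos : 0 < ε := lt_min (by norm_num) (div_pos hδpos (by positivity))
  have hε1 : ε < 1 := lt_of_le_of_lt (min_le_left _ _) (by norm_num)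
  have hεle : ε * ((N:ℝ)^2 * mp) ≤ δ := by
    have h := min_le_right (1/2 : ℝ) (δ / ((N:ℝ)^2 * mp))
    calc ε * ((N:ℝ)^2 * mp) ≤ (δ / ((N:ℝ)^2 * mp)) * ((N:ℝ)^2 * mp) := by
          apply mul_le_mul_of_nonneg_right h (by positivity)
      _ = δ := by field_simp
  clear_value ε δ
  clear hε hδ
  refine ⟨ε, ⟨hεpos, hε1⟩, ?_⟩
  intro z hz1 hz2
  have hzR1 : (1:ℝ) ≤ (z:ℝ) := by exact_mod_cast hz1
  have hzR2 : (z:ℝ) ≤ (N:ℝ) - 1 := by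
    have : z + 1 ≤ N := by omega
    have := (Nat.cast_le (α := ℝ)).2 this
    push_cast at this; linarith
  set D : ℝ := (mp - Mp) * z + ((N:ℝ) - 1) * Mp + Mm with hD
  have hDpos : 0 < D := by nlinarith [mul_nonneg (sub_nonneg.2 hzR2) hMp.le]
  have hgap : δ ≤ (N:ℝ)*mp - D := by
    rcases le_total mp Mp with h | h
    · have := hmin1
      nlinarith [mul_nonneg (sub_nonneg.2 h) (sub_nonneg.2 hzR1)]
    · have := hmin2
      nlinarith [mul_nonneg (sub_nonneg.2 h) (sub_nonneg.2 (by linarith : (z:ℝ) ≤ (N:ℝ)-1))]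
  clear_value D
  clear hD
  refine ⟨hDpos, ?_⟩
  rw [ge_iff_le, le_div_iff₀ hDpos]
  have hDlt : D ≤ (N:ℝ)*mp := by linarith
  have key : ε * D * ((N:ℝ) - z) ≤ (z:ℝ) * ((N:ℝ)*mp - D) := by
    have h1 : ε * D * ((N:ℝ) - z) ≤ ε * ((N:ℝ)*mp) * (N:ℝ) := by
      nlinarith [mul_nonneg (mul_nonneg hεpos.le hN0.le) (sub_nonneg.2 hDlt),
        mul_nonneg (mul_nonneg hεpos.le hDpos.le) (by linarith : (0:ℝ) ≤ (z:ℝ))]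
    have h2 : ε * ((N:ℝ)*mp) * (N:ℝ) = ε * ((N:ℝ)^2 * mp) := by ring
    have h3 : δ ≤ (z:ℝ) * ((N:ℝ)*mp - D) := by
      nlinarith [mul_nonneg (sub_nonneg.2 hzR1) (by linarith : (0:ℝ) ≤ (N:ℝ)*mp - D)]
    linarith [hεle]
  have expand : ((1 - ε) * z / N + ε) * D * N = (1-ε)*z*D + ε*N*D := by
    field_simp
  have : ((1 - ε) * z / N + ε) * D * N ≤ mp * z * N := by
    rw [expand]; nlinarith [key]
  exact le_of_mul_le_mul_right this hN0
end

section
/- Let N ≥ 2 be an integer and M−, m−, m+ positive reals with m− ≤ m+ and (N−1)·M− < (N−2)·m− + m+. Then there exists ε ∈ (0,1) such that for every integer z with 1 ≤ z ≤ N−1, the quantity (M− − m−)·z + (N−1)·m− + m+ is positive and M−·z / ((M− − m−)·z + (N−1)·m− + m+) ≤ (1−ε)·z/N. -/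
/-!
The denominator `D(z) = (M₋ - m₋) z + (N - 1) m₋ + m₊` is affine in `z`, so on `[1, N - 1]` it is
at least `L = min (D 1) (D (N - 1))`. Here `D 1 - N M₋ = (N - 2) m₋ + m₊ - (N - 1) M₋ > 0` and
`D (N - 1) - N M₋ = m₊ - M₋ > 0`, so `N M₋ < L`, and `ε = 1 - N M₋ / L` works:
`M₋ z / D(z) ≤ M₋ z / L = (1 - ε) z / N`.
-/

lemma min_le_affine_of_mem_Icc {a b s t x : ℝ} (hx : x ∈ Set.Icc s t) :
    min (a * s + b) (a * t + b) ≤ a * x + b := by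
  rcases le_total 0 a with ha | ha
  · exact min_le_of_left_le (by nlinarith [hx.1])
  · exact min_le_of_right_le (by nlinarith [hx.2])

lemma exists_mem_Ioo_forall_mul_div_le {M n L : ℝ} (hM : 0 < M) (hn : 0 < n) (hL : n * M < L) :
    ∃ ε ∈ Set.Ioo (0 : ℝ) 1, ∀ D z : ℝ, L ≤ D → 0 ≤ z → M * z / D ≤ (1 - ε) * z / n := by
  have hnM : 0 < n * M := mul_pos hn hM
  have hL₀ : 0 < L := hnM.trans hL
  refine ⟨1 - n * M / L, ⟨?_, ?_⟩, fun D z hD hz => ?_⟩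
  · rwa [sub_pos, div_lt_one hL₀]
  · linarith [div_pos hnM hL₀]
  calc M * z / D ≤ M * z / L := div_le_div_of_nonneg_left (mul_nonneg hM.le hz) hL₀ hD
    _ = (1 - (1 - n * M / L)) * z / n := by field_simp; ring

theorem deathbirth_g2_dominated_by_h2_general (N : ℕ) (hN : 2 ≤ N)
    (Mm mm mp : ℝ) (hMm : 0 < Mm)
    (hle : mm ≤ mp)
    (hcond : ((N : ℝ) - 1) * Mm < ((N : ℝ) - 2) * mm + mp) :
    ∃ ε ∈ Set.Ioo (0 : ℝ) 1, ∀ z : ℕ, 1 ≤ z → z ≤ N - 1 →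
      0 < (Mm - mm) * z + ((N : ℝ) - 1) * mm + mp ∧
      Mm * z / ((Mm - mm) * z + ((N : ℝ) - 1) * mm + mp)
        ≤ (1 - ε) * z / N := by
  have hN₂ : (2 : ℝ) ≤ N := by exact_mod_cast hN
  have hMp : Mm < mp := by nlinarith
  set L := min ((Mm - mm) * 1 + (N - 1) * mm + mp) ((Mm - mm) * (N - 1) + (N - 1) * mm + mp)
  have hL : N * Mm < L := lt_min (by linarith) (by linarith)
  obtain ⟨ε, hε, hdom⟩ := exists_mem_Ioo_forall_mul_div_le hMm (by positivity) hL
  refine ⟨ε, hε, fun z hz₁ hz₂ => ?_⟩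
  have hz : (z : ℝ) ∈ Set.Icc 1 ((N : ℝ) - 1) :=
    ⟨by exact_mod_cast hz₁, le_sub_iff_add_le.mpr (by exact_mod_cast (by omega : z + 1 ≤ N))⟩
  have hLD : L ≤ (Mm - mm) * z + ((N : ℝ) - 1) * mm + mp := by
    simpa only [L, add_assoc] using
      min_le_affine_of_mem_Icc (a := Mm - mm) (b := (N - 1) * mm + mp) hz
  have hNM : (0 : ℝ) < N * Mm := by positivity
  exact ⟨(hNM.trans hL).trans_le hLD, hdom _ _ hLD z.cast_nonneg⟩

/-- Transition `2 → 1` in Lemma 3.2: if `(N−1)M₋ < (N−2)m₋ + m₊` with `m₋ ≤ m₊`, then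
for some `ε ∈ (0,1)` the upper bound `g₂(z)` for the rate `p_{2→1}` is dominated by the
modified voter model rate `h₂(z) = (1−ε)z/N` for all `1 ≤ z ≤ N−1`. -/
theorem deathbirth_g2_dominated_by_h2 (N : ℕ) (hN : 2 ≤ N)
    (Mm mm mp : ℝ) (hMm : 0 < Mm) (hmm : 0 < mm) (hmp : 0 < mp)
    (hle : mm ≤ mp)
    (hcond : ((N : ℝ) - 1) * Mm < ((N : ℝ) - 2) * mm + mp) :
    ∃ ε ∈ Set.Ioo (0 : ℝ) 1, ∀ z : ℕ, 1 ≤ z → z ≤ N - 1 →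
      0 < (Mm - mm) * z + ((N : ℝ) - 1) * mm + mp ∧
      Mm * z / ((Mm - mm) * z + ((N : ℝ) - 1) * mm + mp)
        ≤ (1 - ε) * z / N :=
  deathbirth_g2_dominated_by_h2_general N hN Mm mm mp hMm hle hcond
end

section
/- Fix an integer N ≥ 3 and positive reals a11, a12, a21, a22 with a12 < a21 and (N² − N − 1)·max(a11 − a21, a12 − a22, a11 − a22) < a21 − a12. Define φ1(z) := (a11 − a12)·z/N + a12 and φ2(z) := (a22 − a21)·z/N + a21 for integers 0 ≤ z ≤ N, and set M+ := max_{0 ≤ z ≤ N} φ1(z), M− := max_{0 ≤ z ≤ N−1} φ1(z), m− := min_{0 ≤ z ≤ N} φ2(z), m+ := min_{0 ≤ z ≤ N−1} φ2(z). Then (N−1)·m+ > (N−2)·M+ + M− and (N−1)·M− < (N−2)·m− + m+. -/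
/-!
The payoffs are affine in `z`, so each extremum sits at an endpoint: with
`P = max (a11 - a12) 0 ≥ 0` and `Q = min (a22 - a21) 0 ≤ 0` one gets
`M₊ = a12 + P`, `M₋ = a12 + P (N-1)/N`, `m₋ = a21 + Q`, `m₊ = a21 + Q (N-1)/N`.
After multiplying by `N`, the two inequalities become
`(N²-N-1) P - (N-1)² Q < N(N-1)(a21-a12)` and `(N-1)² P - (N²-N-1) Q < N(N-1)(a21-a12)`.
As `(N-1)² ≤ N²-N-1`, both follow from `(N²-N-1)(P-Q) < N(N-1)(a21-a12)`, which is the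
hypothesis read off in each of the four sign cases of `a11 - a12` and `a22 - a21`.
-/

lemma isGreatest_affine_image_le (c d n : ℝ) (hn : 0 ≤ n) (K : ℕ) :
    IsGreatest ((fun z : ℕ => c * z / n + d) '' {z | z ≤ K}) (max c 0 * K / n + d) := by
  refine ⟨?_, ?_⟩
  · rcases le_total 0 c with hc | hc
    · exact ⟨K, le_refl K, by simp [max_eq_left hc]⟩
    · exact ⟨0, Nat.zero_le K, by simp [max_eq_right hc]⟩
  · rintro _ ⟨z, hz, rfl⟩
    have hzK : (z : ℝ) ≤ K := by exact_mod_cast hz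
    have hslope : c * z ≤ max c 0 * K :=
      calc c * z ≤ max c 0 * z := by gcongr; exact le_max_left c 0
        _ ≤ max c 0 * K := by gcongr
    simp only [add_le_add_iff_right]
    exact div_le_div_of_nonneg_right hslope hn

lemma isLeast_affine_image_le (c d n : ℝ) (hn : 0 ≤ n) (K : ℕ) :
    IsLeast ((fun z : ℕ => c * z / n + d) '' {z | z ≤ K}) (min c 0 * K / n + d) := by
  refine ⟨?_, ?_⟩
  · rcases le_total c 0 with hc | hc
    · exact ⟨K, le_refl K, by simp [min_eq_left hc]⟩
    · exact ⟨0, Nat.zero_le K, by simp [min_eq_right hc]⟩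
  · rintro _ ⟨z, hz, rfl⟩
    have hzK : (z : ℝ) ≤ K := by exact_mod_cast hz
    have hslope : min c 0 * K ≤ c * z :=
      calc min c 0 * K ≤ min c 0 * z := mul_le_mul_of_nonpos_left hzK (min_le_right c 0)
        _ ≤ c * z := by gcongr; exact min_le_left c 0
    simp only [add_le_add_iff_right]
    exact div_le_div_of_nonneg_right hslope hn

lemma mul_max_sub_min_lt {k a11 a12 a21 a22 : ℝ} (hk : 0 ≤ k) (hlt : a12 < a21)
    (h : k * max (a11 - a21) (max (a12 - a22) (a11 - a22)) < a21 - a12) :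
    k * (max (a11 - a12) 0 - min (a22 - a21) 0) < (k + 1) * (a21 - a12) := by
  have h1 : k * (a11 - a21) < a21 - a12 :=
    (mul_le_mul_of_nonneg_left (le_max_left _ _) hk).trans_lt h
  have h2 : k * (a12 - a22) < a21 - a12 :=
    (mul_le_mul_of_nonneg_left ((le_max_left _ _).trans (le_max_right _ _)) hk).trans_lt h
  have h3 : k * (a11 - a22) < a21 - a12 :=
    (mul_le_mul_of_nonneg_left ((le_max_right _ _).trans (le_max_right _ _)) hk).trans_lt h
  rcases le_total a12 a11 with hp | hp <;> rcases le_total a22 a21 with hq | hq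
  · rw [max_eq_left (by linarith), min_eq_left (by linarith)]; linarith
  · rw [max_eq_left (by linarith), min_eq_right (by linarith)]; linarith
  · rw [max_eq_right (by linarith), min_eq_left (by linarith)]; linarith
  · rw [max_eq_right (by linarith), min_eq_right (by linarith)]; nlinarith

section ExtremaInequalities

variable {n P Q a b : ℝ}

lemma extrema_lt_of_spread_left (hn : 2 ≤ n) (hQ : Q ≤ 0)
    (h : (n ^ 2 - n - 1) * (P - Q) < (n ^ 2 - n - 1 + 1) * (b - a)) :
    (n - 2) * (P * n / n + a) + (P * (n - 1) / n + a) < (n - 1) * (Q * (n - 1) / n + b) := by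
  have hn0 : 0 < n := by linarith
  have hgap : 0 < n * (n - 1) * (b - a) + (n - 1) ^ 2 * Q - (n ^ 2 - n - 1) * P := by
    nlinarith [mul_nonneg (by linarith : 0 ≤ n - 2) (neg_nonneg.mpr hQ)]
  have hid : (n - 1) * (Q * (n - 1) / n + b) - ((n - 2) * (P * n / n + a) + (P * (n - 1) / n + a))
      = (n * (n - 1) * (b - a) + (n - 1) ^ 2 * Q - (n ^ 2 - n - 1) * P) / n := by
    field_simp; ring
  linarith [div_pos hgap hn0]

lemma extrema_lt_of_spread_right (hn : 2 ≤ n) (hP : 0 ≤ P)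
    (h : (n ^ 2 - n - 1) * (P - Q) < (n ^ 2 - n - 1 + 1) * (b - a)) :
    (n - 1) * (P * (n - 1) / n + a) < (n - 2) * (Q * n / n + b) + (Q * (n - 1) / n + b) := by
  have hn0 : 0 < n := by linarith
  have hgap : 0 < n * (n - 1) * (b - a) + (n ^ 2 - n - 1) * Q - (n - 1) ^ 2 * P := by
    nlinarith [mul_nonneg (by linarith : 0 ≤ n - 2) hP]
  have hid : (n - 2) * (Q * n / n + b) + (Q * (n - 1) / n + b) - (n - 1) * (P * (n - 1) / n + a)
      = (n * (n - 1) * (b - a) + (n ^ 2 - n - 1) * Q - (n - 1) ^ 2 * P) / n := by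
    field_simp; ring
  linarith [div_pos hgap hn0]

end ExtremaInequalities

theorem deathbirth_payoff_extrema_condition_general (N : ℕ) (hN : 3 ≤ N)
    (a11 a12 a21 a22 : ℝ)
    (hlt : a12 < a21)
    (hcond : ((N : ℝ) ^ 2 - N - 1) * max (a11 - a21) (max (a12 - a22) (a11 - a22))
      < a21 - a12)
    (Mp Mm mm mp : ℝ)
    (hMp : IsGreatest ((fun z : ℕ => (a11 - a12) * z / N + a12) '' {z | z ≤ N}) Mp)
    (hMm : IsGreatest ((fun z : ℕ => (a11 - a12) * z / N + a12) '' {z | z ≤ N - 1}) Mm)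
    (hmm : IsLeast ((fun z : ℕ => (a22 - a21) * z / N + a21) '' {z | z ≤ N}) mm)
    (hmp : IsLeast ((fun z : ℕ => (a22 - a21) * z / N + a21) '' {z | z ≤ N - 1}) mp) :
    ((N : ℝ) - 1) * mp > ((N : ℝ) - 2) * Mp + Mm ∧
    ((N : ℝ) - 1) * Mm < ((N : ℝ) - 2) * mm + mp := by
  have hn : (3 : ℝ) ≤ N := by exact_mod_cast hN
  have hN0 : (0 : ℝ) ≤ N := N.cast_nonneg
  have hcast : ((N - 1 : ℕ) : ℝ) = N - 1 := by rw [Nat.cast_sub (by omega), Nat.cast_one]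
  rw [hMp.unique (isGreatest_affine_image_le _ _ _ hN0 N),
    hMm.unique (isGreatest_affine_image_le _ _ _ hN0 (N - 1)),
    hmm.unique (isLeast_affine_image_le _ _ _ hN0 N),
    hmp.unique (isLeast_affine_image_le _ _ _ hN0 (N - 1)), hcast]
  have hspread := mul_max_sub_min_lt (by nlinarith) hlt hcond
  exact ⟨extrema_lt_of_spread_left (by linarith) (min_le_right _ _) hspread,
    extrema_lt_of_spread_right (by linarith) (le_max_right _ _) hspread⟩

/-- Lemma 3.3: if `a12 < a21` and `(N² − N − 1)·max(a11 − a21, a12 − a22, a11 − a22)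
< a21 − a12`, then the extremal payoffs `M₊ = max_{0≤z≤N} φ₁(z)`,
`M₋ = max_{0≤z≤N−1} φ₁(z)`, `m₋ = min_{0≤z≤N} φ₂(z)`, `m₊ = min_{0≤z≤N−1} φ₂(z)`
satisfy the sufficient conditions `(N−1)m₊ > (N−2)M₊ + M₋` and
`(N−1)M₋ < (N−2)m₋ + m₊` of Lemma 3.2. -/
theorem deathbirth_payoff_extrema_condition (N : ℕ) (hN : 3 ≤ N)
    (a11 a12 a21 a22 : ℝ)
    (h11 : 0 < a11) (h12 : 0 < a12) (h21 : 0 < a21) (h22 : 0 < a22)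
    (hlt : a12 < a21)
    (hcond : ((N : ℝ) ^ 2 - N - 1) * max (a11 - a21) (max (a12 - a22) (a11 - a22))
      < a21 - a12)
    (Mp Mm mm mp : ℝ)
    (hMp : IsGreatest ((fun z : ℕ => (a11 - a12) * z / N + a12) '' {z | z ≤ N}) Mp)
    (hMm : IsGreatest ((fun z : ℕ => (a11 - a12) * z / N + a12) '' {z | z ≤ N - 1}) Mm)
    (hmm : IsLeast ((fun z : ℕ => (a22 - a21) * z / N + a21) '' {z | z ≤ N}) mm)
    (hmp : IsLeast ((fun z : ℕ => (a22 - a21) * z / N + a21) '' {z | z ≤ N - 1}) mp) :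
    ((N : ℝ) - 1) * mp > ((N : ℝ) - 2) * Mp + Mm ∧
    ((N : ℝ) - 1) * Mm < ((N : ℝ) - 2) * mm + mp :=
  deathbirth_payoff_extrema_condition_general N hN a11 a12 a21 a22 hlt hcond Mp Mm mm mp hMp hMm hmm
    hmp
end

section
/- Let a11, a12, a21, a22 be positive reals with a11 = a21, a22 = a12, and a12 < a21, and define D3 := (a11 + a12)/(a11 + a12 + a21 + a22) − (a21 + a22)/(2·a11 + a21 + a22) and D4 := (a11 + a12)/(a11 + a12 + 2·a22) − (a21 + a22)/(2·a11 + a21 + a22). Then D3 + D4 = 1/2 + (a12 + a21)/(3·a12 + a21) − 2·(a12 + a21)/(a12 + 3·a21) > 0. -/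
/-- When `a11 = a21 > a22 = a12`, the sum of interface drifts `D₃ + D₄` for the
one-dimensional nearest-neighbor death-birth process equals
`1/2 + (a12 + a21)/(3a12 + a21) − 2(a12 + a21)/(a12 + 3a21)` and is positive, so the
winning region of cooperators overlaps the prisoner's dilemma triangle. -/
theorem deathbirth_drift_sum_pos (a11 a12 a21 a22 : ℝ)
    (h11 : 0 < a11) (h12 : 0 < a12) (h21 : 0 < a21) (h22 : 0 < a22)
    (he1 : a11 = a21) (he2 : a22 = a12) (hlt : a12 < a21) :
    ((a11 + a12) / (a11 + a12 + a21 + a22) - (a21 + a22) / (2 * a11 + a21 + a22))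
      + ((a11 + a12) / (a11 + a12 + 2 * a22) - (a21 + a22) / (2 * a11 + a21 + a22))
      = 1 / 2 + (a12 + a21) / (3 * a12 + a21) - 2 * ((a12 + a21) / (a12 + 3 * a21)) ∧
    0 < 1 / 2 + (a12 + a21) / (3 * a12 + a21) - 2 * ((a12 + a21) / (a12 + 3 * a21)) := by
  subst he1 he2
  have h1 : 0 < 3 * a22 + a11 := by linarith
  have h2 : 0 < a22 + 3 * a11 := by linarith
  have key : 1 / 2 + (a22 + a11) / (3 * a22 + a11) - 2 * ((a22 + a11) / (a22 + 3 * a11))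
      = ((a11 - a22) * (7 * a22 + 5 * a11)) / (2 * (3 * a22 + a11) * (a22 + 3 * a11)) := by
    field_simp
    ring
  constructor
  · field_simp
    ring
  · rw [key]
    have : 0 < a11 - a22 := by linarith
    positivity
end

section
/- Let a11, a12, a21, a22 be positive reals with a22 < a21, and define D2 := 2 − a21/(a11 + a21), D3 := (a11 + a12)/(a11 + a12 + a21 + a22) − (a21 + a22)/(2·a11 + a21 + a22), and D4 := (a11 + a12)/(a11 + a12 + 2·a22) − (a21 + a22)/(2·a11 + a21 + a22). Then D3 < D4 < D2. -/
/-- Ordering of the interface drifts when `a22 < a21`: `D₃ < D₄ < D₂`, where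
`D₂ = 2 − a21/(a11 + a21)`,
`D₃ = (a11 + a12)/(a11 + a12 + a21 + a22) − (a21 + a22)/(2a11 + a21 + a22)`, and
`D₄ = (a11 + a12)/(a11 + a12 + 2a22) − (a21 + a22)/(2a11 + a21 + a22)`. -/
theorem deathbirth_drift_order_of_a22_lt_a21 (a11 a12 a21 a22 : ℝ)
    (h11 : 0 < a11) (h12 : 0 < a12) (h21 : 0 < a21) (h22 : 0 < a22)
    (hlt : a22 < a21) :
    ((a11 + a12) / (a11 + a12 + a21 + a22) - (a21 + a22) / (2 * a11 + a21 + a22))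
      < ((a11 + a12) / (a11 + a12 + 2 * a22) - (a21 + a22) / (2 * a11 + a21 + a22)) ∧
    ((a11 + a12) / (a11 + a12 + 2 * a22) - (a21 + a22) / (2 * a11 + a21 + a22))
      < 2 - a21 / (a11 + a21) := by
  constructor
  · have h1 : (0:ℝ) < a11 + a12 + 2 * a22 := by linarith
    have h2 : a11 + a12 + 2 * a22 < a11 + a12 + a21 + a22 := by linarith
    have := div_lt_div_of_pos_left (by linarith : (0:ℝ) < a11 + a12) h1 h2
    linarith
  · have h3 : (a11 + a12) / (a11 + a12 + 2 * a22) < 1 := by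
      rw [div_lt_one (by linarith)]; linarith
    have h4 : 0 < (a21 + a22) / (2 * a11 + a21 + a22) :=
      div_pos (by linarith) (by linarith)
    have h5 : a21 / (a11 + a21) < 1 := by
      rw [div_lt_one (by linarith)]; linarith
    linarith
end
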